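/- arXiv:0711.3941 — 4 statements merged into one kernel-verified Lean document; each statement's English description precedes it below -/
import Mathlib

section
/- The band generators a_{ts} = (σ_{t-1}σ_{t-2}⋯σ_{s+1}) σ_s (σ_{s+1}^{-1}⋯σ_{t-2}^{-1}σ_{t-1}^{-1}) of B_n, for 1 ≤ s < t ≤ n, satisfy a_{ts} a_{sr} = a_{tr} a_{ts} = a_{sr} a_{tr} for all 1 ≤ r < s < t ≤ n. -/
/-- Braid relations on `m` generators (0-based: generator `i` is `σ_{i+1}`). -/
def braidRels (m : ℕ) : Set (FreeGroup (Fin m)) :=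
  { r | ∃ i j : Fin m,
      ((i.val + 2 ≤ j.val) ∧
        r = FreeGroup.of i * FreeGroup.of j * (FreeGroup.of i)⁻¹ * (FreeGroup.of j)⁻¹) ∨
      ((j.val = i.val + 1) ∧
        r = (FreeGroup.of i * FreeGroup.of j * FreeGroup.of i) *
            (FreeGroup.of j * FreeGroup.of i * FreeGroup.of j)⁻¹) }

/-- The braid group on `n` strands, presented by Artin generators and relations. -/
abbrev BraidGroup (n : ℕ) := PresentedGroup (braidRels (n - 1))

/-- The Artin generator `σ_k` (1-based, for `1 ≤ k ≤ n-1`; junk value `1` otherwise). -/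
def σ (n k : ℕ) : BraidGroup n :=
  if h : k - 1 < n - 1 then PresentedGroup.of ⟨k - 1, h⟩ else 1

/-- The product `σ_a σ_{a+1} ⋯ σ_b`. -/
def ascProd (n a b : ℕ) : BraidGroup n :=
  ((List.range' a (b + 1 - a)).map (σ n)).prod

/-- The product `σ_b σ_{b-1} ⋯ σ_a`. -/
def descProd (n a b : ℕ) : BraidGroup n :=
  ((List.range' a (b + 1 - a)).reverse.map (σ n)).prod

/-- Garside's fundamental braid `Δ_n = (σ_1⋯σ_{n-1})(σ_1⋯σ_{n-2})⋯σ_1`. -/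
def Δ (n : ℕ) : BraidGroup n :=
  ((List.range (n - 1)).map fun j => ascProd n 1 (n - 1 - j)).prod

/-- The Birman–Ko–Lee fundamental element `δ_n = σ_{n-1}σ_{n-2}⋯σ_1`. -/
def δ (n : ℕ) : BraidGroup n := descProd n 1 (n - 1)

/-- The band generator `a_{ts} = (σ_{t-1}⋯σ_{s+1}) σ_s (σ_{s+1}⁻¹⋯σ_{t-1}⁻¹)`. -/
def band (n t s : ℕ) : BraidGroup n :=
  descProd n (s + 1) (t - 1) * σ n s * (descProd n (s + 1) (t - 1))⁻¹

lemma rel_one {m : ℕ} {r : FreeGroup (Fin m)} (h : r ∈ braidRels m) :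
    (QuotientGroup.mk r : PresentedGroup (braidRels m)) = 1 :=
  (QuotientGroup.eq_one_iff r).mpr (Subgroup.subset_normalClosure h)

lemma braid_comm {m : ℕ} (i j : Fin m) (h : i.val + 2 ≤ j.val) :
    (PresentedGroup.of i : PresentedGroup (braidRels m)) * PresentedGroup.of j
      = PresentedGroup.of j * PresentedGroup.of i := by
  have h1 : (QuotientGroup.mk (FreeGroup.of i * FreeGroup.of j * (FreeGroup.of i)⁻¹ * (FreeGroup.of j)⁻¹) : PresentedGroup (braidRels m)) = 1 :=
    rel_one ⟨i, j, Or.inl ⟨h, rfl⟩⟩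
  have h2 : (PresentedGroup.of i : PresentedGroup (braidRels m)) * PresentedGroup.of j * (PresentedGroup.of i)⁻¹ * (PresentedGroup.of j)⁻¹ = 1 := by
    exact h1
  have h3 : (PresentedGroup.of i : PresentedGroup (braidRels m)) * PresentedGroup.of j * (PresentedGroup.of i)⁻¹ = PresentedGroup.of j := by
    rwa [mul_inv_eq_one] at h2
  rwa [mul_inv_eq_iff_eq_mul] at h3

lemma braid_braid {m : ℕ} (i j : Fin m) (h : j.val = i.val + 1) :
    (PresentedGroup.of i : PresentedGroup (braidRels m)) * PresentedGroup.of j * PresentedGroup.of i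
      = PresentedGroup.of j * PresentedGroup.of i * PresentedGroup.of j := by
  have h1 : (QuotientGroup.mk ((FreeGroup.of i * FreeGroup.of j * FreeGroup.of i) *
            (FreeGroup.of j * FreeGroup.of i * FreeGroup.of j)⁻¹) : PresentedGroup (braidRels m)) = 1 :=
    rel_one ⟨i, j, Or.inr ⟨h, rfl⟩⟩
  have h2 : (PresentedGroup.of i : PresentedGroup (braidRels m)) * PresentedGroup.of j * PresentedGroup.of i * ((PresentedGroup.of j : PresentedGroup (braidRels m)) * PresentedGroup.of i * PresentedGroup.of j)⁻¹ = 1 := by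
    exact h1
  exact mul_inv_eq_one.mp h2

lemma sigma_comm {n : ℕ} {i j : ℕ} (hi : 1 ≤ i) (hij : i + 2 ≤ j) :
    σ n i * σ n j = σ n j * σ n i := by
  unfold σ
  by_cases hj : j - 1 < n - 1
  · by_cases hi' : i - 1 < n - 1
    · rw [dif_pos hj, dif_pos hi']
      exact braid_comm ⟨i - 1, hi'⟩ ⟨j - 1, hj⟩ (show i - 1 + 2 ≤ j - 1 by omega)
    · rw [dif_neg hi', one_mul, mul_one]
  · rw [dif_neg hj, one_mul, mul_one]

lemma sigma_braid {n : ℕ} {i : ℕ} (hi : 1 ≤ i) (hin : i + 1 ≤ n - 1) :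
    σ n i * σ n (i + 1) * σ n i = σ n (i + 1) * σ n i * σ n (i + 1) := by
  have h1 : i - 1 < n - 1 := by omega
  have h2 : i + 1 - 1 < n - 1 := by omega
  unfold σ
  rw [dif_pos h1, dif_pos h2]
  exact braid_braid ⟨i - 1, h1⟩ ⟨i + 1 - 1, h2⟩ (show i + 1 - 1 = i - 1 + 1 by omega)

lemma descProd_nil {n a b : ℕ} (h : b < a) : descProd n a b = 1 := by
  unfold descProd
  have : b + 1 - a = 0 := by omega
  simp [this]

lemma descProd_cons {n a b : ℕ} (ha : 1 ≤ a) (h : a ≤ b) :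
    descProd n a b = σ n b * descProd n a (b - 1) := by
  unfold descProd
  obtain ⟨k, hk⟩ : ∃ k, b + 1 - a = k + 1 := ⟨b - a, by omega⟩
  rw [hk]
  have hb1 : b - 1 + 1 - a = k := by omega
  have hab : a + k = b := by omega
  rw [List.range'_concat, hb1, List.reverse_append]
  simp [hab]

lemma sigma_comm_descProd {n : ℕ} (m a : ℕ) (ha : 1 ≤ a) :
    ∀ b, b + 2 ≤ m → σ n m * descProd n a b = descProd n a b * σ n m := by
  intro b
  induction b with
  | zero => intro _; rw [descProd_nil (by omega), one_mul, mul_one]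
  | succ b ih =>
    intro hbm
    by_cases hab : a ≤ b + 1
    · rw [descProd_cons (by omega) hab]
      have h1 : σ n m * σ n (b + 1) = σ n (b + 1) * σ n m :=
        (sigma_comm (i := b + 1) (j := m) (by omega) (by omega)).symm
      have h2 := ih (by omega)
      simp only [Nat.add_sub_cancel]
      rw [← mul_assoc, h1, mul_assoc, h2, mul_assoc]
    · rw [descProd_nil (by omega), one_mul, mul_one]

lemma sigma_comm_band {n : ℕ} {m s r : ℕ} (hr : 1 ≤ r) (hrs : r < s) (hsm : s + 1 ≤ m) :
    σ n m * band n s r = band n s r * σ n m := by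
  unfold band
  have hd : Commute (σ n m) (descProd n (r + 1) (s - 1)) :=
    sigma_comm_descProd m (r + 1) (by omega) (s - 1) (by omega)
  have hσ : Commute (σ n m) (σ n r) := (sigma_comm (i := r) (j := m) hr (by omega)).symm
  exact ((hd.mul_right hσ).mul_right hd.inv_right).eq

lemma braid_conj {G : Type*} [Group G] {x y b : G} (hbr : x * y * x = y * x * y)
    (hc : y * b = b * y) (ihb : x * b * x = b * x * b) :
    y * (x * b * x⁻¹) * y = (x * b * x⁻¹) * y * (x * b * x⁻¹) := by
  have hcinv : y⁻¹ * b = b * y⁻¹ := (Commute.inv_left (hc : Commute y b)).eq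
  have hx : x⁻¹ * (y * x) = y * x * y⁻¹ := by
    calc x⁻¹ * (y * x) = x⁻¹ * ((y * x * y) * y⁻¹) := by group
      _ = x⁻¹ * ((x * y * x) * y⁻¹) := by rw [← hbr]
      _ = y * x * y⁻¹ := by group
  have main : y * (x * b * x⁻¹) * y * x = (x * b * x⁻¹) * y * (x * b * x⁻¹) * x := by
    calc y * (x * b * x⁻¹) * y * x
        = y * x * b * (x⁻¹ * (y * x)) := by group
      _ = y * x * b * (y * x * y⁻¹) := by rw [hx]
      _ = y * x * (b * y) * x * y⁻¹ := by group
      _ = y * x * (y * b) * x * y⁻¹ := by rw [← hc]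
      _ = (y * x * y) * (b * x * y⁻¹) := by group
      _ = (x * y * x) * (b * x * y⁻¹) := by rw [← hbr]
      _ = x * y * (x * b * x) * y⁻¹ := by group
      _ = x * y * (b * x * b) * y⁻¹ := by rw [ihb]
      _ = x * (y * b) * x * b * y⁻¹ := by group
      _ = x * (b * y) * x * b * y⁻¹ := by rw [hc]
      _ = x * b * y * x * (b * y⁻¹) := by group
      _ = x * b * y * x * (y⁻¹ * b) := by rw [← hcinv]
      _ = x * b * (x⁻¹ * x) * (y * x * y⁻¹) * b := by group
      _ = x * b * (x⁻¹ * x) * (x⁻¹ * (y * x)) * b := by rw [← hx]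
      _ = (x * b * x⁻¹) * y * (x * b * x⁻¹) * x := by group
  exact mul_right_cancel main

lemma band_base {n r : ℕ} : band n (r + 1) r = σ n r := by
  unfold band
  rw [Nat.add_sub_cancel, descProd_nil (by omega)]
  group

lemma band_cons {n s r : ℕ} (hr : 1 ≤ r) (h : r + 1 ≤ s - 1) :
    band n s r = σ n (s - 1) * band n (s - 1) r * (σ n (s - 1))⁻¹ := by
  unfold band
  rw [descProd_cons (by omega) h, mul_inv_rev]
  group

lemma key {n : ℕ} {r : ℕ} (hr : 1 ≤ r) :
    ∀ s, r < s → s ≤ n - 1 →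
      σ n s * band n s r * σ n s = band n s r * σ n s * band n s r := by
  intro s
  induction s using Nat.strong_induction_on with
  | _ s ih =>
    intro hrs hsn
    by_cases hcase : s = r + 1
    · subst hcase
      rw [band_base]
      exact (sigma_braid hr hsn).symm
    · have hb : band n s r = σ n (s - 1) * band n (s - 1) r * (σ n (s - 1))⁻¹ :=
        band_cons hr (by omega)
      have hxy : σ n (s - 1) * σ n s * σ n (s - 1) = σ n s * σ n (s - 1) * σ n s := by
        have h := sigma_braid (n := n) (i := s - 1) (by omega) (by omega)
        rwa [show s - 1 + 1 = s by omega] at h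
      have hc : σ n s * band n (s - 1) r = band n (s - 1) r * σ n s :=
        sigma_comm_band hr (by omega) (by omega)
      have hih := ih (s - 1) (by omega) (by omega) (by omega)
      rw [hb]
      exact braid_conj hxy hc hih

lemma main_aux {n : ℕ} {r s : ℕ} (hr : 1 ≤ r) (hrs : r < s) :
    ∀ t, s < t → t ≤ n →
      band n t s * band n s r = band n t r * band n t s ∧
      band n t r * band n t s = band n s r * band n t r := by
  intro t
  induction t using Nat.strong_induction_on with
  | _ t ih =>
    intro hst htn
    by_cases hcase : t = s + 1
    · subst hcase
      have hbs : band n (s + 1) s = σ n s := band_base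
      have hbr : band n (s + 1) r = σ n s * band n s r * (σ n s)⁻¹ := by
        have h := band_cons (n := n) (s := s + 1) (r := r) hr (by omega)
        simpa using h
      have hk := key (n := n) hr s hrs (by omega)
      constructor
      · rw [hbs, hbr]; group
      · rw [hbs, hbr]
        calc σ n s * band n s r * (σ n s)⁻¹ * σ n s
            = σ n s * band n s r := by group
          _ = band n s r * σ n s * band n s r * (σ n s)⁻¹ := by rw [← hk]; group
          _ = band n s r * (σ n s * band n s r * (σ n s)⁻¹) := by group
    · have hbt_s : band n t s = σ n (t - 1) * band n (t - 1) s * (σ n (t - 1))⁻¹ :=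
        band_cons (by omega) (by omega)
      have hbt_r : band n t r = σ n (t - 1) * band n (t - 1) r * (σ n (t - 1))⁻¹ :=
        band_cons hr (by omega)
      have hcsr : Commute (σ n (t - 1)) (band n s r) := sigma_comm_band hr hrs (by omega)
      obtain ⟨ihA, ihB⟩ := ih (t - 1) (by omega) (by omega) (by omega)
      constructor
      · rw [hbt_s, hbt_r]
        calc σ n (t-1) * band n (t-1) s * (σ n (t-1))⁻¹ * band n s r
            = σ n (t-1) * band n (t-1) s * ((σ n (t-1))⁻¹ * band n s r) := by group
          _ = σ n (t-1) * band n (t-1) s * (band n s r * (σ n (t-1))⁻¹) := by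
              rw [hcsr.inv_left.eq]
          _ = σ n (t-1) * (band n (t-1) s * band n s r) * (σ n (t-1))⁻¹ := by group
          _ = σ n (t-1) * (band n (t-1) r * band n (t-1) s) * (σ n (t-1))⁻¹ := by rw [ihA]
          _ = σ n (t-1) * band n (t-1) r * (σ n (t-1))⁻¹ *
              (σ n (t-1) * band n (t-1) s * (σ n (t-1))⁻¹) := by group
      · rw [hbt_s, hbt_r]
        calc σ n (t-1) * band n (t-1) r * (σ n (t-1))⁻¹ *
              (σ n (t-1) * band n (t-1) s * (σ n (t-1))⁻¹)
            = σ n (t-1) * (band n (t-1) r * band n (t-1) s) * (σ n (t-1))⁻¹ := by group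
          _ = σ n (t-1) * (band n s r * band n (t-1) r) * (σ n (t-1))⁻¹ := by rw [ihB]
          _ = (σ n (t-1) * band n s r) * (band n (t-1) r * (σ n (t-1))⁻¹) := by group
          _ = (band n s r * σ n (t-1)) * (band n (t-1) r * (σ n (t-1))⁻¹) := by rw [hcsr.eq]
          _ = band n s r * (σ n (t-1) * band n (t-1) r * (σ n (t-1))⁻¹) := by group


/-- Band generators satisfy `a_{ts} a_{sr} = a_{tr} a_{ts} = a_{sr} a_{tr}`
for all `1 ≤ r < s < t ≤ n`. -/
theorem band_triple_relation (n r s t : ℕ) (hr : 1 ≤ r) (hrs : r < s) (hst : s < t)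
    (htn : t ≤ n) :
    band n t s * band n s r = band n t r * band n t s ∧
    band n t r * band n t s = band n s r * band n t r :=
  main_aux hr hrs t hst htn
end

section
/- For every 1 ≤ s < t ≤ n, the Birman–Ko–Lee fundamental element δ_n = σ_{n-1}σ_{n-2}⋯σ_1 satisfies a_{ts} δ_n = δ_n a_{t+1,s+1} whenever t+1 ≤ n (indices taken with a_{t+1,s+1} defined as the corresponding band generator). -/
lemma braid_rel_eq_one (n : ℕ) (r : FreeGroup (Fin (n-1))) (hr : r ∈ braidRels (n-1)) :
    PresentedGroup.mk (braidRels (n-1)) r = 1 := by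
  exact (QuotientGroup.eq_one_iff r).mpr (Subgroup.subset_normalClosure hr)

lemma braid_comm_fin (n : ℕ) (i j : Fin (n-1)) (h : i.val + 2 ≤ j.val) :
    (PresentedGroup.of i : BraidGroup n) * PresentedGroup.of j =
      PresentedGroup.of j * PresentedGroup.of i := by
  have := braid_rel_eq_one n
    (FreeGroup.of i * FreeGroup.of j * (FreeGroup.of i)⁻¹ * (FreeGroup.of j)⁻¹)
    ⟨i, j, Or.inl ⟨h, rfl⟩⟩
  simp only [map_mul, map_inv] at this
  have h2 : PresentedGroup.mk (braidRels (n-1)) (FreeGroup.of i) *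
      PresentedGroup.mk (braidRels (n-1)) (FreeGroup.of j) *
      (PresentedGroup.mk (braidRels (n-1)) (FreeGroup.of j) *
       PresentedGroup.mk (braidRels (n-1)) (FreeGroup.of i))⁻¹ = 1 := by
    rw [mul_inv_rev, ← mul_assoc]; exact this
  exact mul_inv_eq_one.mp h2

lemma braid_braid_fin (n : ℕ) (i j : Fin (n-1)) (h : j.val = i.val + 1) :
    (PresentedGroup.of i : BraidGroup n) * PresentedGroup.of j * PresentedGroup.of i =
      PresentedGroup.of j * PresentedGroup.of i * PresentedGroup.of j := by
  have := braid_rel_eq_one n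
    ((FreeGroup.of i * FreeGroup.of j * FreeGroup.of i) *
      (FreeGroup.of j * FreeGroup.of i * FreeGroup.of j)⁻¹)
    ⟨i, j, Or.inr ⟨h, rfl⟩⟩
  simp only [map_mul, map_inv] at this
  exact mul_inv_eq_one.mp this

lemma sigma_comm_s5 (n a b : ℕ) (ha : 1 ≤ a) (hab : a + 2 ≤ b) :
    σ n a * σ n b = σ n b * σ n a := by
  unfold σ
  by_cases hb : b - 1 < n - 1
  · by_cases ha' : a - 1 < n - 1
    · simp only [dif_pos hb, dif_pos ha']
      exact braid_comm_fin n ⟨a-1, ha'⟩ ⟨b-1, hb⟩ (by simp only [Fin.val_mk]; omega)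
    · simp [dif_neg ha']
  · simp [dif_neg hb]

lemma sigma_braid_s5 (n k : ℕ) (hk : 1 ≤ k) (hk2 : k + 1 ≤ n - 1) :
    σ n k * σ n (k+1) * σ n k = σ n (k+1) * σ n k * σ n (k+1) := by
  unfold σ
  have h1 : k - 1 < n - 1 := by omega
  have h2 : k + 1 - 1 < n - 1 := by omega
  simp only [dif_pos h1, dif_pos h2]
  exact braid_braid_fin n ⟨k-1, h1⟩ ⟨k+1-1, h2⟩ (by simp; omega)

lemma descProd_empty (n a b : ℕ) (h : b < a) : descProd n a b = 1 := by
  unfold descProd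
  have : b + 1 - a = 0 := by omega
  simp [this]

lemma descProd_single (n a : ℕ) : descProd n a a = σ n a := by
  unfold descProd
  simp

lemma descProd_split (n a c b : ℕ) (hc : 1 ≤ c) (h1 : a ≤ c) (h2 : c ≤ b + 1) :
    descProd n a b = descProd n c b * descProd n a (c - 1) := by
  unfold descProd
  obtain ⟨d, rfl⟩ : ∃ d, c = a + d := ⟨c - a, by omega⟩
  have hr : List.range' a (b + 1 - a) =
      List.range' a ((a + d) - a) ++ List.range' (a + d) (b + 1 - (a + d)) := by
    have e1 : a + d - a = d := by omega
    rw [e1, List.range'_append_1]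
    congr 1; omega
  have hc1 : a + d - 1 + 1 - a = a + d - a := by omega
  rw [hr, List.reverse_append, List.map_append, List.prod_append, hc1]

lemma descProd_peel (n a b : ℕ) (h : a ≤ b) (ha : 1 ≤ a) :
    descProd n a b = σ n b * descProd n a (b - 1) := by
  rw [descProd_split n a b b (by omega) h (by omega), descProd_single]

lemma sigma_comm_descProd_lt (n k a b : ℕ) (ha : 1 ≤ a) (h : b + 2 ≤ k) :
    σ n k * descProd n a b = descProd n a b * σ n k := by
  induction b with
  | zero => rw [descProd_empty n a 0 (by omega)]; group
  | succ b ih =>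
    by_cases hab : a ≤ b + 1
    · rw [descProd_peel n a (b+1) hab ha]
      have hc : σ n k * σ n (b+1) = σ n (b+1) * σ n k :=
        (sigma_comm_s5 n (b+1) k (by omega) (by omega)).symm
      have ih' := ih (by omega)
      calc σ n k * (σ n (b+1) * descProd n a (b+1-1))
          = σ n (b+1) * (σ n k * descProd n a (b+1-1)) := by
            rw [← mul_assoc, hc, mul_assoc]
        _ = σ n (b+1) * (descProd n a (b+1-1) * σ n k) := by
            simp only [Nat.add_sub_cancel]; rw [ih']
        _ = σ n (b+1) * descProd n a (b+1-1) * σ n k := by rw [mul_assoc]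
    · rw [descProd_empty n a (b+1) (by omega)]; group

lemma sigma_comm_descProd_gt (n k a b : ℕ) (hk : 1 ≤ k) (h : k + 2 ≤ a) :
    σ n k * descProd n a b = descProd n a b * σ n k := by
  induction b with
  | zero => rw [descProd_empty n a 0 (by omega)]; group
  | succ b ih =>
    by_cases hab : a ≤ b + 1
    · rw [descProd_peel n a (b+1) hab (by omega)]
      have hc : σ n k * σ n (b+1) = σ n (b+1) * σ n k :=
        sigma_comm_s5 n k (b+1) hk (by omega)
      calc σ n k * (σ n (b+1) * descProd n a (b+1-1))
          = σ n (b+1) * (σ n k * descProd n a (b+1-1)) := by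
            rw [← mul_assoc, hc, mul_assoc]
        _ = σ n (b+1) * (descProd n a (b+1-1) * σ n k) := by
            simp only [Nat.add_sub_cancel]; rw [ih]
        _ = σ n (b+1) * descProd n a (b+1-1) * σ n k := by rw [mul_assoc]
    · rw [descProd_empty n a (b+1) (by omega)]; group

lemma sigma_slide (n k : ℕ) (hk : 1 ≤ k) (hk2 : k ≤ n - 2) :
    σ n k * δ n = δ n * σ n (k + 1) := by
  have hn : 3 ≤ n := by omega
  have hδ : δ n = descProd n (k+2) (n-1) * (σ n (k+1) * (σ n k * descProd n 1 (k-1))) := by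
    unfold δ
    rw [descProd_split n 1 (k+2) (n-1) (by omega) (by omega) (by omega)]
    congr 1
    have h1 : k + 2 - 1 = k + 1 := by omega
    rw [h1, descProd_peel n 1 (k+1) (by omega) (by omega)]
    congr 1
    have h2 : k + 1 - 1 = k := by omega
    rw [h2, descProd_peel n 1 k (by omega) (by omega)]
  rw [hδ]
  calc σ n k * (descProd n (k+2) (n-1) * (σ n (k+1) * (σ n k * descProd n 1 (k-1))))
      = descProd n (k+2) (n-1) * (σ n k * σ n (k+1) * σ n k * descProd n 1 (k-1)) := by
        rw [← mul_assoc, sigma_comm_descProd_gt n k (k+2) (n-1) hk (by omega)]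
        group
    _ = descProd n (k+2) (n-1) * (σ n (k+1) * σ n k * σ n (k+1) * descProd n 1 (k-1)) := by
        rw [sigma_braid_s5 n k hk (by omega)]
    _ = descProd n (k+2) (n-1) * (σ n (k+1) * σ n k * (descProd n 1 (k-1) * σ n (k+1))) := by
        rw [mul_assoc (σ n (k+1) * σ n k),
          sigma_comm_descProd_lt n (k+1) 1 (k-1) (by omega) (by omega)]
    _ = descProd n (k+2) (n-1) * (σ n (k+1) * (σ n k * descProd n 1 (k-1))) * σ n (k+1) := by
        group

lemma descProd_slide (n a b : ℕ) (ha : 1 ≤ a) (hb : b ≤ n - 2) :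
    descProd n a b * δ n = δ n * descProd n (a + 1) (b + 1) := by
  induction b with
  | zero =>
    rw [descProd_empty n a 0 (by omega), descProd_empty n (a+1) 1 (by omega)]
    group
  | succ b ih =>
    by_cases hab : a ≤ b + 1
    · rw [descProd_peel n a (b+1) hab ha, descProd_peel n (a+1) (b+2) (by omega) (by omega)]
      have h1 : b + 1 - 1 = b := by omega
      have h2 : b + 2 - 1 = b + 1 := by omega
      rw [h1, h2]
      calc σ n (b+1) * descProd n a b * δ n
          = σ n (b+1) * (δ n * descProd n (a+1) (b+1)) := by
            rw [mul_assoc, ih (by omega)]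
        _ = δ n * σ n (b+2) * descProd n (a+1) (b+1) := by
            rw [← mul_assoc, sigma_slide n (b+1) (by omega) (by omega)]
        _ = δ n * (σ n (b+2) * descProd n (a+1) (b+1)) := by rw [mul_assoc]
    · rw [descProd_empty n a (b+1) (by omega), descProd_empty n (a+1) (b+2) (by omega)]
      group

/-- For `1 ≤ s < t` with `t + 1 ≤ n`, one has `a_{ts} δ_n = δ_n a_{t+1,s+1}`. -/
theorem band_mul_bkl_delta (n s t : ℕ) (hs : 1 ≤ s) (hst : s < t) (htn : t + 1 ≤ n) :
    band n t s * δ n = δ n * band n (t + 1) (s + 1) := by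
  have hD : descProd n (s+1) (t-1) * δ n = δ n * descProd n (s+2) t := by
    have := descProd_slide n (s+1) (t-1) (by omega) (by omega)
    have e1 : t - 1 + 1 = t := by omega
    rwa [e1] at this
  have hDinv : (descProd n (s+1) (t-1))⁻¹ * δ n = δ n * (descProd n (s+2) t)⁻¹ := by
    rw [inv_mul_eq_iff_eq_mul, ← mul_assoc, hD, mul_assoc, mul_inv_cancel, mul_one]
  have hσ : σ n s * δ n = δ n * σ n (s+1) := sigma_slide n s hs (by omega)
  unfold band
  have e2 : t + 1 - 1 = t := rfl
  have e3 : s + 1 + 1 = s + 2 := rfl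
  rw [e2, e3]
  calc descProd n (s+1) (t-1) * σ n s * (descProd n (s+1) (t-1))⁻¹ * δ n
      = descProd n (s+1) (t-1) * σ n s * (δ n * (descProd n (s+2) t)⁻¹) := by
        rw [mul_assoc, hDinv]
    _ = descProd n (s+1) (t-1) * (δ n * σ n (s+1)) * (descProd n (s+2) t)⁻¹ := by
        rw [mul_assoc (descProd n (s+1) (t-1)) (σ n s), ← hσ]; group
    _ = δ n * descProd n (s+2) t * σ n (s+1) * (descProd n (s+2) t)⁻¹ := by
        rw [← mul_assoc, hD]
    _ = δ n * (descProd n (s+2) t * σ n (s+1) * (descProd n (s+2) t)⁻¹) := by group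
end

section
/- Correctness of Kurt's triple-decomposition protocol: let G be a monoid and a_1, a_2, a_3, b_1, b_2, b_3, x_1, x_2, y_1, y_2 ∈ G with x_1, x_2, y_1, y_2 invertible, where b_1 commutes with x_1, b_2 commutes with x_2, a_2 commutes with y_1, and a_3 commutes with y_2. Set u = a_1 x_1, v = x_1^{-1} a_2 x_2, w = x_2^{-1} a_3, p = b_1 y_1, q = y_1^{-1} b_2 y_2, r = y_2^{-1} b_3. Then a_1 p a_2 q a_3 r = u b_1 v b_2 w b_3 = a_1 b_1 a_2 b_2 a_3 b_3. -/
/-- Correctness of Kurt's triple-decomposition protocol in a monoid `G` with invertible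
elements `x₁, x₂, y₁, y₂`: with `u = a₁x₁`, `v = x₁⁻¹a₂x₂`, `w = x₂⁻¹a₃`,
`p = b₁y₁`, `q = y₁⁻¹b₂y₂`, `r = y₂⁻¹b₃`, both parties compute
`a₁ p a₂ q a₃ r = u b₁ v b₂ w b₃ = a₁ b₁ a₂ b₂ a₃ b₃`. -/
theorem kurt_triple_decomposition_shared_key {G : Type*} [Monoid G]
    (a₁ a₂ a₃ b₁ b₂ b₃ : G) (x₁ x₂ y₁ y₂ : Gˣ)
    (hbx1 : b₁ * ↑x₁ = ↑x₁ * b₁) (hbx2 : b₂ * ↑x₂ = ↑x₂ * b₂)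
    (hay1 : a₂ * ↑y₁ = ↑y₁ * a₂) (hay2 : a₃ * ↑y₂ = ↑y₂ * a₃)
    (u v w p q r : G)
    (hu : u = a₁ * ↑x₁) (hv : v = ↑x₁⁻¹ * a₂ * ↑x₂) (hw : w = ↑x₂⁻¹ * a₃)
    (hp : p = b₁ * ↑y₁) (hq : q = ↑y₁⁻¹ * b₂ * ↑y₂) (hr : r = ↑y₂⁻¹ * b₃) :
    a₁ * p * a₂ * q * a₃ * r = u * b₁ * v * b₂ * w * b₃ ∧
    u * b₁ * v * b₂ * w * b₃ = a₁ * b₁ * a₂ * b₂ * a₃ * b₃ := by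
  subst hu hv hw hp hq hr
  constructor
  · calc a₁ * (b₁ * ↑y₁) * a₂ * (↑y₁⁻¹ * b₂ * ↑y₂) * a₃ * (↑y₂⁻¹ * b₃)
        = a₁ * b₁ * (↑y₁ * a₂ * ↑y₁⁻¹) * b₂ * (↑y₂ * a₃ * ↑y₂⁻¹) * b₃ := by
          simp [mul_assoc]
      _ = a₁ * b₁ * a₂ * b₂ * a₃ * b₃ := by
          rw [← hay1, ← hay2]; simp [mul_assoc]
      _ = a₁ * (↑x₁ * b₁ * ↑x₁⁻¹) * a₂ * (↑x₂ * b₂ * ↑x₂⁻¹) * a₃ * b₃ := by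
          rw [← hbx1, ← hbx2]; simp [mul_assoc]
      _ = a₁ * ↑x₁ * b₁ * (↑x₁⁻¹ * a₂ * ↑x₂) * b₂ * (↑x₂⁻¹ * a₃) * b₃ := by
          simp [mul_assoc]
  · calc a₁ * ↑x₁ * b₁ * (↑x₁⁻¹ * a₂ * ↑x₂) * b₂ * (↑x₂⁻¹ * a₃) * b₃
        = a₁ * (↑x₁ * b₁ * ↑x₁⁻¹) * a₂ * (↑x₂ * b₂ * ↑x₂⁻¹) * a₃ * b₃ := by
          simp [mul_assoc]
      _ = a₁ * b₁ * a₂ * b₂ * a₃ * b₃ := by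
          rw [← hbx1, ← hbx2]; simp [mul_assoc]
end

section
/- The shifted conjugacy operation x ∗ y = x · d(y) · σ_1 · d(x)^{-1} on B_∞ satisfies the left self-distributivity law: r ∗ (s ∗ p) = (r ∗ s) ∗ (r ∗ p) for all r, s, p ∈ B_∞. -/
/-- Braid relations on infinitely many generators (0-based: generator `i` is `σ_{i+1}`). -/
def braidRelsInf : Set (FreeGroup ℕ) :=
  { r | ∃ i j : ℕ,
      ((i + 2 ≤ j) ∧
        r = FreeGroup.of i * FreeGroup.of j * (FreeGroup.of i)⁻¹ * (FreeGroup.of j)⁻¹) ∨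
      ((j = i + 1) ∧
        r = (FreeGroup.of i * FreeGroup.of j * FreeGroup.of i) *
            (FreeGroup.of j * FreeGroup.of i * FreeGroup.of j)⁻¹) }

/-- The braid group `B_∞` on infinitely many strands. -/
abbrev BraidInf := PresentedGroup braidRelsInf

/-- The Artin generator `σ_k` of `B_∞` (1-based, `k ≥ 1`). -/
def σ' (k : ℕ) : BraidInf := PresentedGroup.of (k - 1)

lemma braidRel_one {r : FreeGroup ℕ} (hr : r ∈ braidRelsInf) :
    PresentedGroup.mk braidRelsInf r = 1 :=
  (QuotientGroup.eq_one_iff r).mpr (Subgroup.subset_normalClosure hr)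

lemma braid_comm_s17 {i j : ℕ} (h : i + 2 ≤ j) :
    Commute (PresentedGroup.of (rels := braidRelsInf) i)
      (PresentedGroup.of (rels := braidRelsInf) j) := by
  have h1 : PresentedGroup.mk braidRelsInf
      (FreeGroup.of i * FreeGroup.of j * (FreeGroup.of i)⁻¹ * (FreeGroup.of j)⁻¹) = 1 :=
    braidRel_one ⟨i, j, Or.inl ⟨h, rfl⟩⟩
  simp only [map_mul, map_inv] at h1
  have : (PresentedGroup.of (rels := braidRelsInf) i) * PresentedGroup.of j *
      (PresentedGroup.of i)⁻¹ * (PresentedGroup.of j)⁻¹ = 1 := h1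
  have h2 : PresentedGroup.of (rels := braidRelsInf) i * PresentedGroup.of j *
      (PresentedGroup.of j * PresentedGroup.of i)⁻¹ = 1 := by
    rw [mul_inv_rev, ← mul_assoc]; exact h1
  exact mul_inv_eq_one.mp h2

lemma braid_braid_s17 {i : ℕ} :
    PresentedGroup.of (rels := braidRelsInf) i * PresentedGroup.of (i+1) * PresentedGroup.of i =
    PresentedGroup.of (i+1) * PresentedGroup.of i * PresentedGroup.of (i+1) := by
  have h1 : PresentedGroup.mk braidRelsInf
      ((FreeGroup.of i * FreeGroup.of (i+1) * FreeGroup.of i) *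
        (FreeGroup.of (i+1) * FreeGroup.of i * FreeGroup.of (i+1))⁻¹) = 1 :=
    braidRel_one ⟨i, i+1, Or.inr ⟨rfl, rfl⟩⟩
  simp only [map_mul, map_inv] at h1
  exact mul_inv_eq_one.mp h1

/-- Abstract group-theoretic core of the computation. -/
lemma key_calc {G : Type*} [Group G] (a b r s1 r1 p2 s2 r2 : G)
    (h1 : a * p2 = p2 * a) (h2 : a * s2⁻¹ = s2⁻¹ * a) (h3 : a * r2 = r2 * a)
    (hb : a * b * a = b * a * b) :
    r * (s1 * p2 * b * s2⁻¹) * a * r1⁻¹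
      = (r * s1 * a * r1⁻¹) * (r1 * p2 * b * r2⁻¹) * a * (r1 * s2 * b * r2⁻¹)⁻¹ := by
  have e3 : r2⁻¹ * a * r2 = a := by
    rw [mul_assoc, h3, ← mul_assoc, inv_mul_cancel, one_mul]
  have e4 : a * b * a * b⁻¹ = b * a := by
    rw [hb, mul_assoc, mul_inv_cancel, mul_one]
  calc r * (s1 * p2 * b * s2⁻¹) * a * r1⁻¹
      = r * s1 * p2 * b * (s2⁻¹ * a) * r1⁻¹ := by group
    _ = r * s1 * p2 * b * (a * s2⁻¹) * r1⁻¹ := by rw [h2]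
    _ = r * s1 * p2 * (b * a) * s2⁻¹ * r1⁻¹ := by group
    _ = r * s1 * p2 * (a * b * a * b⁻¹) * s2⁻¹ * r1⁻¹ := by rw [e4]
    _ = r * s1 * (p2 * a) * (b * (a * (b⁻¹ * (s2⁻¹ * r1⁻¹)))) := by group
    _ = r * s1 * (a * p2) * (b * (a * (b⁻¹ * (s2⁻¹ * r1⁻¹)))) := by rw [h1]
    _ = r * s1 * a * p2 * b * (r2⁻¹ * a * r2) * b⁻¹ * s2⁻¹ * r1⁻¹ := by rw [e3]; group
    _ = (r * s1 * a * r1⁻¹) * (r1 * p2 * b * r2⁻¹) * a * (r1 * s2 * b * r2⁻¹)⁻¹ := by group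

/-- The shifted conjugacy operation `x ∗ y = x · d(y) · σ₁ · d(x)⁻¹` on `B_∞`
(where `d` is the shift endomorphism `σ_i ↦ σ_{i+1}`) satisfies the left
self-distributivity law `r ∗ (s ∗ p) = (r ∗ s) ∗ (r ∗ p)`. -/
theorem shifted_conjugacy_left_self_distributive
    (d : BraidInf →* BraidInf) (hd : ∀ k, 1 ≤ k → d (σ' k) = σ' (k + 1))
    (star : BraidInf → BraidInf → BraidInf)
    (hstar : ∀ x y, star x y = x * d y * σ' 1 * (d x)⁻¹) :
    ∀ r s p : BraidInf, star r (star s p) = star (star r s) (star r p) := by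
  have ha : ∀ x : BraidInf, σ' 1 * d (d x) = d (d x) * σ' 1 := by
    intro x
    have hx : x ∈ Subgroup.comap (d.comp d) (Subgroup.centralizer {σ' 1}) := by
      refine PresentedGroup.generated_by _ _ (fun j => ?_) x
      have h0 : PresentedGroup.of (rels := braidRelsInf) j = σ' (j + 1) := by
        simp [σ']
      have hdd : d (d (PresentedGroup.of (rels := braidRelsInf) j)) = σ' (j + 3) := by
        rw [h0, hd (j+1) (by omega)]
        have := hd (j+2) (by omega)
        simpa using this
      simp only [Subgroup.mem_comap, MonoidHom.comp_apply]
      rw [hdd]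
      intro g hg
      rcases hg with rfl
      have h2 : σ' (j + 3) = PresentedGroup.of (rels := braidRelsInf) (j + 2) := rfl
      rw [h2]
      exact (braid_comm_s17 (i := 0) (j := j + 2) (by omega)).eq
    simpa [Subgroup.mem_comap, Subgroup.mem_centralizer_iff] using
      (Subgroup.mem_comap.mp hx) (σ' 1) rfl
  have hb : σ' 1 * σ' 2 * σ' 1 = σ' 2 * σ' 1 * σ' 2 := by
    have := braid_braid_s17 (i := 0)
    simpa [σ'] using this
  have hda : d (σ' 1) = σ' 2 := hd 1 le_rfl
  intro r s p
  have ha2 : ∀ x : BraidInf, σ' 1 * (d (d x))⁻¹ = (d (d x))⁻¹ * σ' 1 := by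
    intro x
    have := ha x⁻¹
    simpa using this
  simp only [hstar]
  simp only [map_mul, map_inv, hda]
  exact key_calc (σ' 1) (σ' 2) r (d s) (d r) (d (d p)) (d (d s)) (d (d r))
    (ha p) (ha2 s) (ha r) hb
end
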